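/- arXiv:1801.05496 — 3 statements merged into one kernel-verified Lean document; each statement's English description precedes it below -/
import Mathlib

section
/- Let G be a connected bipartite simple graph on a finite nonempty vertex set V and let r ∈ V. Then the maximum of rng(f) over all strong 1-Lipschitz mappings f of (G, r) equals diam(G) + 1. -/
open SimpleGraph Finset

lemma walk_split {V : Type*} {G : SimpleGraph V} {u v : V} (p : G.Walk u v) :
    ∀ k, k ≤ p.length → ∃ (p₁ : G.Walk u (p.getVert k)) (p₂ : G.Walk (p.getVert k) v),
      p₁.length = k ∧ p₂.length = p.length - k := by
  induction p with
  | nil =>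
    intro k hk
    simp only [Walk.length_nil, Nat.le_zero] at hk
    subst hk
    exact ⟨Walk.nil, Walk.nil, rfl, rfl⟩
  | @cons a b c h q ih =>
    intro k hk
    match k with
    | 0 => exact ⟨Walk.nil, Walk.cons h q, rfl, rfl⟩
    | k + 1 =>
      obtain ⟨p₁, p₂, h1, h2⟩ := ih k (by simpa using hk)
      exact ⟨Walk.cons h p₁, p₂, by simp [h1], by simpa using h2⟩

lemma dist_getVert' {V : Type*} {G : SimpleGraph V} (hG : G.Connected) (u v : V) (k : ℕ)
    (hk : k ≤ G.dist u v) : ∃ w, G.dist u w = k := by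
  obtain ⟨p, hp⟩ := hG.exists_walk_length_eq_dist u v
  refine ⟨p.getVert k, ?_⟩
  obtain ⟨p₁, p₂, h1, h2⟩ := walk_split p k (by omega)
  have hle := SimpleGraph.dist_le p₁
  have hle2 := SimpleGraph.dist_le p₂
  rw [h1] at hle
  rw [h2] at hle2
  have htri := hG.dist_triangle (u := u) (v := p.getVert k) (w := v)
  omega

lemma walk_parity {V : Type*} {G : SimpleGraph V} (c : G.Coloring (Fin 2)) {a b : V}
    (p : G.Walk a b) : c a = c b ↔ Even p.length := by
  induction p with
  | nil => simp
  | @cons a m b h q ih =>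
    have hne : c a ≠ c m := c.valid h
    have key : ∀ x y z : Fin 2, x ≠ y → (x = z ↔ ¬ y = z) := by decide
    simp only [Walk.length_cons, Nat.even_add_one, ← ih]
    exact key _ _ _ hne

lemma dist_parity_ne {V : Type*} {G : SimpleGraph V} (hG : G.Connected)
    (c : G.Coloring (Fin 2)) {u a b : V} (hab : G.Adj a b) : G.dist u a ≠ G.dist u b := by
  obtain ⟨p, hp⟩ := hG.exists_walk_length_eq_dist u a
  obtain ⟨q, hq⟩ := hG.exists_walk_length_eq_dist u b
  have h1 := walk_parity c p
  have h2 := walk_parity c q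
  have h3 := walk_parity c (p.concat hab)
  rw [Walk.length_concat] at h3
  intro hcontra
  have h4 : Even (p.length + 1) ↔ Even q.length := h3.symm.trans h2
  rw [hp, hq, hcontra] at h4
  simp [Nat.even_add_one] at h4
  obtain ⟨k, hk⟩ | ⟨k, hk⟩ := Nat.even_or_odd (G.dist u b)
  · obtain ⟨j, hj⟩ := h4.mpr ⟨k, hk⟩
    omega
  · obtain ⟨j, hj⟩ := h4.mp ⟨k, hk⟩
    omega

lemma dist_adj_abs {V : Type*} {G : SimpleGraph V} (hG : G.Connected)
    (c : G.Coloring (Fin 2)) {u a b : V} (hab : G.Adj a b) :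
    |(G.dist u a : ℤ) - (G.dist u b : ℤ)| = 1 := by
  have hne := dist_parity_ne hG c hab (u := u)
  have h1 : G.dist a b = 1 := SimpleGraph.dist_eq_one_iff_adj.mpr hab
  have t1 := hG.dist_triangle (u := u) (v := b) (w := a)
  have t2 := hG.dist_triangle (u := u) (v := a) (w := b)
  rw [SimpleGraph.dist_comm (u := b) (v := a)] at t1
  rw [h1] at t1 t2
  have hne' : (G.dist u a : ℤ) ≠ (G.dist u b : ℤ) := by exact_mod_cast hne
  rcases abs_cases ((G.dist u a : ℤ) - (G.dist u b : ℤ)) with ⟨h, _⟩ | ⟨h, _⟩ <;>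
    rw [h] <;> omega

lemma lipschitz_of_edge {V : Type*} {G : SimpleGraph V} (f : V → ℤ)
    (hf : ∀ u v : V, G.Adj u v → |f u - f v| = 1) {a b : V} (p : G.Walk a b) :
    |f a - f b| ≤ p.length := by
  induction p with
  | nil => simp
  | @cons a m b h q ih =>
    calc |f a - f b| ≤ |f a - f m| + |f m - f b| := abs_sub_le _ _ _
    _ ≤ 1 + q.length := by rw [hf a m h]; exact add_le_add le_rfl ih
    _ = ((Walk.cons h q).length : ℤ) := by simp [Walk.length_cons]; ring

/-- For a connected bipartite rooted graph `(G, r)` on a finite nonempty vertex set, the maximum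
of the range over all strong `1`-Lipschitz mappings of `(G, r)` equals `diam G + 1`. -/
theorem stmt_8 {V : Type*} [Fintype V] [Nonempty V] (G : SimpleGraph V) (hG : G.Connected)
    (hbip : G.Colorable 2) (r : V) :
    IsGreatest {n : ℕ | ∃ f : V → ℤ, f r = 0 ∧
        (∀ u v : V, G.Adj u v → |f u - f v| = (1 : ℤ)) ∧
        (Finset.univ.image f).card = n}
      ((Finset.univ : Finset (V × V)).sup (fun p => G.dist p.1 p.2) + 1) := by
  classical
  obtain ⟨c⟩ := hbip
  set D := (Finset.univ : Finset (V × V)).sup (fun p => G.dist p.1 p.2) with hD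
  have hdle : ∀ a b : V, G.dist a b ≤ D := fun a b =>
    Finset.le_sup (f := fun p : V × V => G.dist p.1 p.2) (Finset.mem_univ (a, b))
  constructor
  · -- membership
    obtain ⟨⟨u₀, v₀⟩, -, hsup⟩ := Finset.exists_mem_eq_sup (Finset.univ : Finset (V × V))
      Finset.univ_nonempty (fun p => G.dist p.1 p.2)
    refine ⟨fun w => (G.dist u₀ w : ℤ) - (G.dist u₀ r : ℤ), by simp, ?_, ?_⟩
    · intro a b hab
      have := dist_adj_abs hG c hab (u := u₀)
      calc |((G.dist u₀ a : ℤ) - G.dist u₀ r) - ((G.dist u₀ b : ℤ) - G.dist u₀ r)|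
          = |(G.dist u₀ a : ℤ) - (G.dist u₀ b : ℤ)| := by ring_nf
        _ = 1 := this
    · have himg : Finset.univ.image (fun w => G.dist u₀ w) = Finset.range (D + 1) := by
        ext k
        simp only [Finset.mem_image, Finset.mem_univ, true_and, Finset.mem_range,
          Nat.lt_succ_iff]
        constructor
        · rintro ⟨w, rfl⟩; exact hdle u₀ w
        · intro hk
          exact dist_getVert' hG u₀ v₀ k (by rw [← hsup]; exact hk)
      have hcomp : (fun w => (G.dist u₀ w : ℤ) - (G.dist u₀ r : ℤ)) =
          (fun n : ℕ => (n : ℤ) - (G.dist u₀ r : ℤ)) ∘ (fun w => G.dist u₀ w) := rfl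
      rw [hcomp, ← Finset.image_image, himg,
        Finset.card_image_of_injective _ (fun x y hxy => by omega),
        Finset.card_range]
  · -- upper bound
    rintro n ⟨f, hfr, hedge, hcard⟩
    have hlip : ∀ a b : V, |f a - f b| ≤ (D : ℤ) := by
      intro a b
      obtain ⟨p, hp⟩ := hG.exists_walk_length_eq_dist a b
      calc |f a - f b| ≤ p.length := lipschitz_of_edge f hedge p
        _ ≤ (D : ℤ) := by exact_mod_cast hp ▸ hdle a b
    set S := Finset.univ.image f with hS
    have hSne : S.Nonempty := Finset.Nonempty.image Finset.univ_nonempty f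
    set m := S.min' hSne with hm
    have hsub : S ⊆ Finset.Icc m (m + D) := by
      intro x hx
      rw [Finset.mem_Icc]
      refine ⟨S.min'_le x hx, ?_⟩
      obtain ⟨a, -, rfl⟩ := Finset.mem_image.mp hx
      obtain ⟨b, -, hb⟩ := Finset.mem_image.mp (S.min'_mem hSne)
      have := hlip a b
      rw [hm, ← hb]
      have habs := abs_le.mp this
      omega
    calc n = S.card := hcard.symm
      _ ≤ (Finset.Icc m (m + D)).card := Finset.card_le_card hsub
      _ = D + 1 := by rw [Int.card_Icc]; omega
end

section
/- Let G be a connected simple graph on a finite vertex set V that is not a complete graph. Then there exist two distinct non-adjacent vertices a, b ∈ V such that, with G + ab denoting the graph obtained from G by adding the edge ab, one has |ℒ_1(G + ab, a)| ≤ |ℒ_1(G, a)| − 1. -/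
/-!
Adding the edge `ab` only adds constraints, so `ℒ₁(G + ab, a) ⊆ ℒ₁(G, a)`, and both sets are finite
because on a connected graph `|f v| ≤ dist(a, v)`. The inclusion is strict for any non-adjacent
`a ≠ b`: the distance function `v ↦ dist(a, v)` is `1`-Lipschitz on `G`, but jumps by
`dist(a, b) ≥ 2` across the new edge.
-/

namespace SimpleGraph

variable {V : Type*} (G : SimpleGraph V)

def lipschitzMaps (r : V) (M : ℤ) : Set (V → ℤ) :=
  {f | f r = 0 ∧ ∀ u v, G.Adj u v → |f u - f v| ≤ M}

variable {G}

theorem lipschitzMaps_anti {H : SimpleGraph V} (hGH : G ≤ H) (r : V) (M : ℤ) :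
    H.lipschitzMaps r M ⊆ G.lipschitzMaps r M :=
  fun _ hf => ⟨hf.1, fun u v huv => hf.2 u v (hGH huv)⟩

theorem abs_sub_le_mul_length {M : ℤ} {f : V → ℤ} (hf : ∀ u v, G.Adj u v → |f u - f v| ≤ M)
    {u v : V} (p : G.Walk u v) : |f u - f v| ≤ M * p.length := by
  induction p with
  | nil => simp
  | @cons x y z h p ih =>
    calc |f x - f z| ≤ |f x - f y| + |f y - f z| := abs_sub_le _ _ _
      _ ≤ M + M * p.length := add_le_add (hf x y h) ih
      _ = M * (p.cons h).length := by push_cast [Walk.length_cons]; ring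

theorem Connected.abs_le_mul_dist (hG : G.Connected) {r : V} {M : ℤ} {f : V → ℤ}
    (hf : f ∈ G.lipschitzMaps r M) (v : V) : |f v| ≤ M * G.dist r v := by
  obtain ⟨p, hp⟩ := hG.exists_walk_length_eq_dist r v
  simpa [hf.1, hp] using abs_sub_le_mul_length hf.2 p

theorem Connected.lipschitzMaps_finite [Finite V] (hG : G.Connected) (r : V) (M : ℤ) :
    (G.lipschitzMaps r M).Finite := by
  refine (Set.Finite.pi fun v => Set.finite_Icc (-(M * G.dist r v)) (M * G.dist r v)).subset ?_
  intro f hf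
  simpa only [Set.mem_univ_pi, Set.mem_Icc, ← abs_le] using hG.abs_le_mul_dist hf

theorem Connected.dist_mem_lipschitzMaps (hG : G.Connected) (r : V) :
    (fun v => (G.dist r v : ℤ)) ∈ G.lipschitzMaps r 1 := by
  refine ⟨by simp, fun u v huv => ?_⟩
  have hv_le : G.dist r v ≤ G.dist r u + 1 :=
    dist_eq_one_iff_adj.mpr huv ▸ hG.dist_triangle
  have hu_le : G.dist r u ≤ G.dist r v + 1 :=
    dist_eq_one_iff_adj.mpr huv.symm ▸ hG.dist_triangle
  rw [abs_sub_le_iff]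
  constructor <;> push_cast <;> omega

theorem Connected.two_le_dist (hG : G.Connected) {a b : V} (hab : a ≠ b) (hnadj : ¬G.Adj a b) :
    2 ≤ G.dist a b := by
  have h0 : G.dist a b ≠ 0 := fun h => hab (hG.dist_eq_zero_iff.mp h)
  have h1 : G.dist a b ≠ 1 := fun h => hnadj (dist_eq_one_iff_adj.mp h)
  omega

theorem Connected.ncard_lipschitzMaps_sup_edge_lt [Finite V] (hG : G.Connected) {a b : V}
    (hab : a ≠ b) (hnadj : ¬G.Adj a b) :
    ((G ⊔ edge a b).lipschitzMaps a 1).ncard < (G.lipschitzMaps a 1).ncard := by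
  refine Set.ncard_lt_ncard ⟨lipschitzMaps_anti le_sup_left a 1, fun hsub => ?_⟩
    (hG.lipschitzMaps_finite a 1)
  have hjump := (hsub (hG.dist_mem_lipschitzMaps a)).2 a b
    (Or.inr ((edge_adj a b a b).mpr ⟨Or.inl ⟨rfl, rfl⟩, hab⟩))
  have h2 := hG.two_le_dist hab hnadj
  simp only [dist_self, Nat.cast_zero, zero_sub, abs_neg, Nat.abs_cast] at hjump
  omega

end SimpleGraph

/-- If a connected graph `G` on a finite vertex set is not complete, then there are two distinct
non-adjacent vertices `a, b` such that adding the edge `ab` strictly decreases the number of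
`1`-Lipschitz mappings rooted at `a`: `|ℒ₁(G + ab, a)| ≤ |ℒ₁(G, a)| - 1`. -/
theorem stmt_11 {V : Type*} [Fintype V] (G : SimpleGraph V) (hG : G.Connected)
    (hnc : ¬ ∀ x y : V, x ≠ y → G.Adj x y) :
    ∃ a b : V, a ≠ b ∧ ¬ G.Adj a b ∧
      {f : V → ℤ | f a = 0 ∧
          ∀ u v : V, (G ⊔ SimpleGraph.fromEdgeSet {s(a, b)}).Adj u v →
            |f u - f v| ≤ (1 : ℤ)}.ncard + 1 ≤
      {f : V → ℤ | f a = 0 ∧ ∀ u v : V, G.Adj u v → |f u - f v| ≤ (1 : ℤ)}.ncard := by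
  push Not at hnc
  obtain ⟨a, b, hab, hnadj⟩ := hnc
  exact ⟨a, b, hab, hnadj, hG.ncard_lipschitzMaps_sup_edge_lt hab hnadj⟩
end

section
/- Let G be a connected simple graph on a finite nonempty vertex set V with |V| = n and let r ∈ V. Let T be any tree on a finite vertex set of cardinality n with root r'. Then |ℒ_1(G, r)| ≤ |ℒ_1(T, r')|. -/
open SimpleGraph

section Aux

variable {V : Type*} {G : SimpleGraph V} {r u v : V}

/-- On a shortest walk from `r` to `u`, no vertex other than `u` has distance
from `r` at least `G.dist r u`. -/
private lemma notMem_support_of_shortest {p : G.Walk r u}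
    (hlen : p.length = G.dist r u) (hvu : v ≠ u) (hd : G.dist r u ≤ G.dist r v) :
    v ∉ p.support := by
  classical
  intro h
  have h1 : G.dist r v ≤ (p.takeUntil v h).length := SimpleGraph.dist_le _
  have h2 := congrArg SimpleGraph.Walk.length (p.take_spec h)
  rw [SimpleGraph.Walk.length_append] at h2
  have h3 : (p.dropUntil v h).length = 0 := by omega
  exact hvu (SimpleGraph.Walk.eq_of_length_eq_zero h3)

/-- Appending a new vertex to a path is a path. -/
private lemma isPath_concat {p : G.Walk r u} (hp : p.IsPath) (h : G.Adj u v)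
    (hv : v ∉ p.support) : (p.concat h).IsPath := by
  rw [SimpleGraph.Walk.isPath_def, SimpleGraph.Walk.support_concat,
    List.nodup_append]
  exact ⟨hp.support_nodup, List.nodup_singleton v,
    fun a ha b hb => by rw [List.mem_singleton] at hb; subst hb; exact fun hab => hv (hab ▸ ha)⟩

/-- Every non-root vertex of a connected graph has a neighbor strictly closer to the root. -/
private lemma exists_parent (hG : G.Connected) (hv : v ≠ r) :
    ∃ u, G.Adj u v ∧ G.dist r u + 1 = G.dist r v := by
  obtain ⟨q, hq⟩ := (hG v r).exists_walk_length_eq_dist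
  rcases q with _ | ⟨h, q'⟩
  · exact absurd rfl hv
  · rename_i u'
    refine ⟨u', h.symm, ?_⟩
    rw [SimpleGraph.Walk.length_cons] at hq
    have h1 : G.dist r u' ≤ q'.length := by
      rw [SimpleGraph.dist_comm]; exact SimpleGraph.dist_le q'
    have h2 : G.dist r v ≤ G.dist r u' + G.dist u' v := hG.dist_triangle
    have h3 : G.dist u' v = 1 := SimpleGraph.dist_eq_one_iff_adj.mpr h.symm
    have h4 : G.dist r v = G.dist v r := SimpleGraph.dist_comm
    omega

/-- In an acyclic connected graph, adjacent vertices have different distances from the root. -/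
private lemma adj_dist_ne (hc : G.Connected) (ha : G.IsAcyclic) (h : G.Adj u v)
    (r : V) : G.dist r u ≠ G.dist r v := by
  intro heq
  obtain ⟨p, hp, hpl⟩ := (hc r u).exists_path_of_dist
  obtain ⟨q, hq, hql⟩ := (hc r v).exists_path_of_dist
  have hvp : v ∉ p.support := notMem_support_of_shortest hpl h.ne' (le_of_eq heq)
  have hpath : (p.concat h).IsPath := isPath_concat hp h hvp
  have := ha.path_unique ⟨p.concat h, hpath⟩ ⟨q, hq⟩
  have hlen := congrArg (fun (P : G.Path r v) => (P : G.Walk r v).length) this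
  simp only [SimpleGraph.Walk.length_concat] at hlen
  omega

/-- In an acyclic connected graph, the parent (neighbor closer to the root) is unique. -/
private lemma parent_unique (hc : G.Connected) (ha : G.IsAcyclic) {u₁ u₂ : V}
    (h₁ : G.Adj u₁ v) (h₂ : G.Adj u₂ v)
    (hd₁ : G.dist r u₁ + 1 = G.dist r v) (hd₂ : G.dist r u₂ + 1 = G.dist r v) :
    u₁ = u₂ := by
  obtain ⟨p₁, hp₁, hpl₁⟩ := (hc r u₁).exists_path_of_dist
  obtain ⟨p₂, hp₂, hpl₂⟩ := (hc r u₂).exists_path_of_dist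
  have hv₁ : v ∉ p₁.support := notMem_support_of_shortest hpl₁ h₁.ne' (by omega)
  have hv₂ : v ∉ p₂.support := notMem_support_of_shortest hpl₂ h₂.ne' (by omega)
  have := ha.path_unique ⟨p₁.concat h₁, isPath_concat hp₁ h₁ hv₁⟩
    ⟨p₂.concat h₂, isPath_concat hp₂ h₂ hv₂⟩
  have h' : p₁.concat h₁ = p₂.concat h₂ := congrArg Subtype.val this
  obtain ⟨hv, -⟩ := SimpleGraph.Walk.concat_inj h'
  exact hv

/-- In an acyclic connected graph, adjacent vertices have distances from the root
differing by exactly one. -/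
private lemma adj_dist_dichotomy (hc : G.Connected) (ha : G.IsAcyclic) (h : G.Adj u v)
    (r : V) : G.dist r u + 1 = G.dist r v ∨ G.dist r v + 1 = G.dist r u := by
  have h1 : G.dist r v ≤ G.dist r u + G.dist u v := hc.dist_triangle
  have h2 : G.dist r u ≤ G.dist r v + G.dist v u := hc.dist_triangle
  have h3 : G.dist u v = 1 := SimpleGraph.dist_eq_one_iff_adj.mpr h
  have h4 : G.dist v u = 1 := SimpleGraph.dist_eq_one_iff_adj.mpr h.symm
  have h5 := adj_dist_ne hc ha h r
  omega

end Aux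

/-- Build a function on vertices by accumulating increments `g` along the parent map `p`,
descending through the "distance" function `d`. -/
private noncomputable def buildF {W : Type*} (d : W → ℕ) (p : W → W) (g : W → ℤ) (v : W) :
    ℤ :=
  if hd : d v = 0 then 0
  else (if h : d (p v) < d v then buildF d p g (p v) else 0) + g v
termination_by d v
decreasing_by exact h

private lemma buildF_eq_zero {W : Type*} {d : W → ℕ} {p : W → W} {g : W → ℤ} {v : W}
    (hd : d v = 0) : buildF d p g v = 0 := by
  rw [buildF]; simp [hd]

private lemma buildF_eq {W : Type*} {d : W → ℕ} {p : W → W} {g : W → ℤ} {v : W}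
    (hd : d v ≠ 0) (h : d (p v) < d v) :
    buildF d p g v = buildF d p g (p v) + g v := by
  rw [buildF]; simp [hd, h]

/-- Any connected rooted graph admits an injection from its 1-Lipschitz mappings
into the increment data indexed by non-root vertices. -/
private lemma exists_injection_to_pi {V : Type*} (G : SimpleGraph V) (hG : G.Connected)
    (r : V) :
    ∃ F : {f : V → ℤ | f r = 0 ∧ ∀ u v : V, G.Adj u v → |f u - f v| ≤ (1 : ℤ)} →
      ({v : V // v ≠ r} → (Finset.Icc (-1 : ℤ) 1)), Function.Injective F := by
  choose p hp using fun v : {v : V // v ≠ r} => exists_parent hG v.2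
  refine ⟨fun f v => ⟨f.1 v.1 - f.1 (p v), ?_⟩, ?_⟩
  · rw [Finset.mem_Icc, ← abs_le, abs_sub_comm]
    exact f.2.2 (p v) v.1 (hp v).1
  · intro f₁ f₂ hff
    ext x
    have key : ∀ n : ℕ, ∀ v : V, G.dist r v = n → f₁.1 v = f₂.1 v := by
      intro n
      induction n using Nat.strong_induction_on with
      | _ n ih =>
        intro v hv
        by_cases hvr : v = r
        · subst hvr; rw [f₁.2.1, f₂.2.1]
        · have hd : G.dist r (p ⟨v, hvr⟩) + 1 = G.dist r v := (hp ⟨v, hvr⟩).2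
          have hpos : 0 < G.dist r v := hG.pos_dist_of_ne (Ne.symm hvr)
          have hih : f₁.1 (p ⟨v, hvr⟩) = f₂.1 (p ⟨v, hvr⟩) :=
            ih (G.dist r (p ⟨v, hvr⟩)) (by omega) _ rfl
          have h1 : f₁.1 v - f₁.1 (p ⟨v, hvr⟩) = f₂.1 v - f₂.1 (p ⟨v, hvr⟩) :=
            congrArg Subtype.val (congrFun hff ⟨v, hvr⟩)
          linarith
    exact key (G.dist r x) x rfl

/-- Any rooted tree admits an injection from increment data into its 1-Lipschitz mappings. -/
private lemma exists_injection_from_pi {W : Type*} (T : SimpleGraph W) (hT : T.IsTree)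
    (r' : W) :
    ∃ F : ({w : W // w ≠ r'} → (Finset.Icc (-1 : ℤ) 1)) →
      {f : W → ℤ | f r' = 0 ∧ ∀ u v : W, T.Adj u v → |f u - f v| ≤ (1 : ℤ)},
      Function.Injective F := by
  classical
  obtain ⟨hc, ha⟩ := hT
  choose p0 hp0 using fun v : {w : W // w ≠ r'} => exists_parent hc (r := r') v.2
  set d : W → ℕ := T.dist r' with hd_def
  set P : W → W := fun w => if h : w = r' then r' else p0 ⟨w, h⟩ with hP_def
  have hP : ∀ w (h : w ≠ r'), T.Adj (P w) w ∧ d (P w) + 1 = d w := by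
    intro w h
    simp only [hP_def, dif_neg h]
    exact hp0 ⟨w, h⟩
  have hdzero : ∀ w : W, d w = 0 ↔ w = r' := by
    intro w
    constructor
    · intro h0
      by_contra hne
      have := hc.pos_dist_of_ne (Ne.symm hne)
      simp only [hd_def] at h0; omega
    · intro h; subst h; simp [hd_def]
  -- the construction
  set gxf : ({w : W // w ≠ r'} → (Finset.Icc (-1 : ℤ) 1)) → W → ℤ :=
    fun g w => if h : w = r' then 0 else (g ⟨w, h⟩ : ℤ) with hgxf
  have hmem : ∀ g, buildF d P (gxf g) ∈
      {f : W → ℤ | f r' = 0 ∧ ∀ u v : W, T.Adj u v → |f u - f v| ≤ (1 : ℤ)} := by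
    intro g
    set gx : W → ℤ := gxf g with hgx
    set f : W → ℤ := buildF d P gx with hf
    have hunf : ∀ w (h : w ≠ r'), f w = f (P w) + gx w := by
      intro w h
      exact buildF_eq (fun h0 => h ((hdzero w).mp h0)) (by have := (hP w h).2; omega)
    have hbound : ∀ w (h : w ≠ r'), |gx w| ≤ 1 := by
      intro w h
      have := (g ⟨w, h⟩).2
      rw [Finset.mem_Icc] at this
      simp only [hgx, hgxf, dif_neg h]
      rw [abs_le]; exact this
    have main : ∀ u v : W, T.Adj u v → d u + 1 = d v → |f u - f v| ≤ 1 := by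
      intro u v hadj hdd
      have hv : v ≠ r' := by
        intro h
        rw [h, (hdzero r').mpr rfl] at hdd; omega
      have huP : u = P v :=
        parent_unique hc ha hadj (hP v hv).1 hdd (hP v hv).2
      rw [hunf v hv, ← huP]
      simpa using hbound v hv
    refine ⟨buildF_eq_zero ((hdzero r').mpr rfl), ?_⟩
    intro u v hadj
    rcases adj_dist_dichotomy hc ha hadj r' with h | h
    · exact main u v hadj h
    · rw [abs_sub_comm]; exact main v u hadj.symm h
  refine ⟨fun g => ⟨buildF d P (gxf g), hmem g⟩, ?_⟩
  intro g₁ g₂ hgg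
  rw [Subtype.ext_iff] at hgg
  simp only at hgg
  funext v
  have hne := v.2
  have hd0 : d v.1 ≠ 0 := fun h0 => hne ((hdzero v.1).mp h0)
  have hlt : d (P v.1) < d v.1 := by have := (hP v.1 hne).2; omega
  have e₁ := buildF_eq (d := d) (p := P) (g := gxf g₁) hd0 hlt
  have e₂ := buildF_eq (d := d) (p := P) (g := gxf g₂) hd0 hlt
  rw [hgg] at e₁
  have hgv : gxf g₁ v.1 = gxf g₂ v.1 := by omega
  simp only [hgxf, dif_neg hne] at hgv
  exact Subtype.ext hgv

/-- Among connected graphs on `n` vertices, trees maximize the number of rooted `1`-Lipschitz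
mappings: any connected graph `G` on `n` vertices has at most as many `1`-Lipschitz mappings as
any tree `T` on `n` vertices. -/
theorem stmt_15 {V W : Type*} [Fintype V] [Fintype W] [Nonempty V]
    (G : SimpleGraph V) (hG : G.Connected) (r : V)
    (T : SimpleGraph W) (hT : T.IsTree) (r' : W)
    (hcard : Fintype.card V = Fintype.card W) :
    {f : V → ℤ | f r = 0 ∧ ∀ u v : V, G.Adj u v → |f u - f v| ≤ (1 : ℤ)}.ncard ≤
    {f : W → ℤ | f r' = 0 ∧ ∀ u v : W, T.Adj u v → |f u - f v| ≤ (1 : ℤ)}.ncard := by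
  classical
  obtain ⟨F₁, hF₁⟩ := exists_injection_to_pi G hG r
  obtain ⟨F₂, hF₂⟩ := exists_injection_from_pi T hT r'
  obtain ⟨F₃, hF₃⟩ := exists_injection_to_pi T hT.isConnected r'
  have hfinT : Finite ({f : W → ℤ | f r' = 0 ∧ ∀ u v : W, T.Adj u v → |f u - f v| ≤ (1 : ℤ)}) :=
    Finite.of_injective F₃ hF₃
  have hsub : Fintype.card {v : V // v ≠ r} = Fintype.card {w : W // w ≠ r'} := by
    have h1 : Fintype.card {v : V // v ≠ r} = Fintype.card V - 1 := by
      rw [Fintype.card_subtype_compl, Fintype.card_subtype_eq]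
    have h2 : Fintype.card {w : W // w ≠ r'} = Fintype.card W - 1 := by
      rw [Fintype.card_subtype_compl, Fintype.card_subtype_eq]
    rw [h1, h2, hcard]
  have e : {v : V // v ≠ r} ≃ {w : W // w ≠ r'} := Fintype.equivOfCardEq hsub
  calc {f : V → ℤ | f r = 0 ∧ ∀ u v : V, G.Adj u v → |f u - f v| ≤ (1 : ℤ)}.ncard
      = Nat.card {f : V → ℤ | f r = 0 ∧ ∀ u v : V, G.Adj u v → |f u - f v| ≤ (1 : ℤ)} :=
        (Nat.card_coe_set_eq _).symm
    _ ≤ Nat.card ({v : V // v ≠ r} → (Finset.Icc (-1 : ℤ) 1)) :=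
        Nat.card_le_card_of_injective F₁ hF₁
    _ = Nat.card ({w : W // w ≠ r'} → (Finset.Icc (-1 : ℤ) 1)) :=
        Nat.card_congr (Equiv.arrowCongr e (Equiv.refl _))
    _ ≤ Nat.card {f : W → ℤ | f r' = 0 ∧ ∀ u v : W, T.Adj u v → |f u - f v| ≤ (1 : ℤ)} :=
        Nat.card_le_card_of_injective F₂ hF₂
    _ = {f : W → ℤ | f r' = 0 ∧ ∀ u v : W, T.Adj u v → |f u - f v| ≤ (1 : ℤ)}.ncard :=
        Nat.card_coe_set_eq _
end
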